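/- Let (S, μ) be a complete measure space and X a real Banach space whose norm is Fréchet differentiable at every nonzero point. Suppose f ∈ L¹(μ, X) is nonzero and μ({s : f(s) = 0}) = 0. Then Birkhoff-James orthogonality is right additive at f: if f ⊥_BJ g₁ and f ⊥_BJ g₂ in L¹(μ, X), then f ⊥_BJ (g₁ + g₂). -/

import Mathlib

open MeasureTheory

noncomputable section

/-- Birkhoff–James orthogonality: `x ⊥_BJ y` iff `‖x + t • y‖ ≥ ‖x‖` for all scalars `t`. -/
def BJOrth {Y : Type*} [NormedAddCommGroup Y] [NormedSpace ℝ Y] (x y : Y) : Prop :=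
  ∀ t : ℝ, ‖x‖ ≤ ‖x + t • y‖

/-- `x` is a left symmetric point. -/
def LeftSymPt {Y : Type*} [NormedAddCommGroup Y] [NormedSpace ℝ Y] (x : Y) : Prop :=
  ∀ y : Y, BJOrth x y → BJOrth y x

/-- `x` is a right symmetric point. -/
def RightSymPt {Y : Type*} [NormedAddCommGroup Y] [NormedSpace ℝ Y] (x : Y) : Prop :=
  ∀ y : Y, BJOrth y x → BJOrth x y

/-- `x` is a smooth point: the norm-one support functional at `x` is unique. -/
def SmoothPt {Y : Type*} [NormedAddCommGroup Y] [NormedSpace ℝ Y] (x : Y) : Prop :=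
  ∃! F : Y →L[ℝ] ℝ, ‖F‖ = 1 ∧ F x = ‖x‖

/-- The norm of `X` is Fréchet differentiable at every nonzero point. -/
def FrechetDiffNorm (X : Type*) [NormedAddCommGroup X] [NormedSpace ℝ X] : Prop :=
  ∀ x : X, x ≠ 0 → ∃ f : X →L[ℝ] ℝ, HasFDerivAt (fun y : X => ‖y‖) f x

/-- `A` is an atom of the measure `μ`. -/
def IsMeasAtom {S : Type*} [MeasurableSpace S] (μ : Measure S) (A : Set S) : Prop :=
  MeasurableSet A ∧ 0 < μ A ∧ ∀ B ⊆ A, MeasurableSet B → μ B = 0 ∨ μ B = μ A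

namespace BJAux

open Classical in
def Fder {X : Type*} [NormedAddCommGroup X] [NormedSpace ℝ X]
    (hX : FrechetDiffNorm X) (x : X) : X →L[ℝ] ℝ :=
  if h : x ≠ 0 then (hX x h).choose else 0

lemma Fder_spec {X : Type*} [NormedAddCommGroup X] [NormedSpace ℝ X]
    (hX : FrechetDiffNorm X) {x : X} (hx : x ≠ 0) :
    HasFDerivAt (fun y : X => ‖y‖) (Fder hX x) x := by
  classical
  simp only [Fder, dif_pos hx]
  exact (hX x hx).choose_spec

lemma convexOn_norm_affine {Y : Type*} [NormedAddCommGroup Y] [NormedSpace ℝ Y] (x y : Y) :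
    ConvexOn ℝ Set.univ (fun t : ℝ => ‖x + t • y‖) := by
  refine ⟨convex_univ, ?_⟩
  intro a _ b _ p q hp hq hpq
  have key : x + (p • a + q • b) • y = p • (x + a • y) + q • (x + b • y) := by
    have h : p • (x + a • y) + q • (x + b • y) = (p + q) • x + (p * a + q * b) • y := by
      module
    rw [h, hpq, one_smul, smul_eq_mul, smul_eq_mul]
  show ‖x + (p • a + q • b) • y‖ ≤ p • ‖x + a • y‖ + q • ‖x + b • y‖
  rw [key]
  calc ‖p • (x + a • y) + q • (x + b • y)‖
      ≤ ‖p • (x + a • y)‖ + ‖q • (x + b • y)‖ := norm_add_le _ _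
    _ = p * ‖x + a • y‖ + q * ‖x + b • y‖ := by
        rw [norm_smul, norm_smul, Real.norm_of_nonneg hp, Real.norm_of_nonneg hq]
    _ = p • ‖x + a • y‖ + q • ‖x + b • y‖ := by simp [smul_eq_mul]

lemma convex_global_min {h : ℝ → ℝ} (hc : ConvexOn ℝ Set.univ h)
    (hd : HasDerivAt h 0 0) (t : ℝ) : h 0 ≤ h t := by
  by_contra H
  push_neg at H
  have hslope := hasDerivAt_iff_tendsto_slope.1 hd
  rcases lt_trichotomy t 0 with ht | ht | ht
  · have key : ∀ s ∈ Set.Ioo t 0, (h t - h 0) / t ≤ slope h 0 s := by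
      intro s hs
      have hs1 := hs.1; have hs2 := hs.2
      have hb0 : (0:ℝ) ≤ s / t := div_nonneg_of_nonpos hs2.le ht.le
      have hb1 : s / t ≤ 1 := by
        rw [div_le_one_of_neg ht]; exact hs1.le
      have hcx := hc.2 (Set.mem_univ (0:ℝ)) (Set.mem_univ t)
        (sub_nonneg.2 hb1) hb0 (by ring)
      have hcomb : (1 - s / t) • (0:ℝ) + (s / t) • t = s := by
        simp [smul_eq_mul, div_mul_cancel₀ _ (ne_of_lt ht)]
      rw [hcomb] at hcx
      have hle : h s - h 0 ≤ (s / t) * (h t - h 0) := by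
        simp only [smul_eq_mul] at hcx; nlinarith
      rw [slope_def_field, sub_zero, le_div_iff_of_neg hs2]
      have he : s / t * (h t - h 0) = (h t - h 0) / t * s := by ring
      linarith
    have hc' : 0 < (h t - h 0) / t := div_pos_of_neg_of_neg (sub_neg.2 H) ht
    have hten : Filter.Tendsto (slope h 0) (nhdsWithin 0 (Set.Iio 0)) (nhds 0) :=
      hslope.mono_left (nhdsWithin_mono _ fun x hx => ne_of_lt hx)
    have hev : ∀ᶠ s in nhdsWithin 0 (Set.Iio 0), (h t - h 0) / t ≤ slope h 0 s :=
      Filter.mem_of_superset (Ioo_mem_nhdsLT_of_mem ⟨ht, le_refl 0⟩) key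
    have := ge_of_tendsto hten hev
    linarith
  · exact absurd (ht ▸ H) (lt_irrefl _)
  · have key : ∀ s ∈ Set.Ioo 0 t, slope h 0 s ≤ (h t - h 0) / t := by
      intro s hs
      have hs1 := hs.1; have hs2 := hs.2
      have hb0 : (0:ℝ) ≤ s / t := div_nonneg hs1.le ht.le
      have hb1 : s / t ≤ 1 := div_le_one_of_le₀ hs2.le ht.le
      have hcx := hc.2 (Set.mem_univ (0:ℝ)) (Set.mem_univ t)
        (sub_nonneg.2 hb1) hb0 (by ring)
      have hcomb : (1 - s / t) • (0:ℝ) + (s / t) • t = s := by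
        simp [smul_eq_mul, div_mul_cancel₀ _ (ne_of_gt ht)]
      rw [hcomb] at hcx
      have hle : h s - h 0 ≤ (s / t) * (h t - h 0) := by
        simp only [smul_eq_mul] at hcx; nlinarith
      rw [slope_def_field, sub_zero, div_le_iff₀ hs1]
      have he : s / t * (h t - h 0) = (h t - h 0) / t * s := by ring
      linarith
    have hc' : (h t - h 0) / t < 0 := div_neg_of_neg_of_pos (sub_neg.2 H) ht
    have hten : Filter.Tendsto (slope h 0) (nhdsWithin 0 (Set.Ioi 0)) (nhds 0) :=
      hslope.mono_left (nhdsWithin_mono _ fun x hx => ne_of_gt hx)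
    have hev : ∀ᶠ s in nhdsWithin 0 (Set.Ioi 0), slope h 0 s ≤ (h t - h 0) / t :=
      Filter.mem_of_superset (Ioo_mem_nhdsGT_of_mem ⟨le_refl 0, ht⟩) key
    have := le_of_tendsto hten hev
    linarith

lemma bj_iff {Y : Type*} [NormedAddCommGroup Y] [NormedSpace ℝ Y] (x y : Y) {c : ℝ}
    (hd : HasDerivAt (fun t : ℝ => ‖x + t • y‖) c 0) : BJOrth x y ↔ c = 0 := by
  constructor
  · intro hbj
    have hmin : IsLocalMin (fun t : ℝ => ‖x + t • y‖) 0 := by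
      apply Filter.Eventually.of_forall
      intro t
      simpa using hbj t
    exact hmin.hasDerivAt_eq_zero hd
  · intro hc t
    have := convex_global_min (convexOn_norm_affine x y) (hc ▸ hd) t
    simpa using this


lemma deriv_lemma {S X : Type*} [MeasurableSpace S] {μ : Measure S}
    [NormedAddCommGroup X] [NormedSpace ℝ X] [CompleteSpace X]
    (hX : FrechetDiffNorm X) (f g : Lp X 1 μ)
    (hz : μ {s | (f : S → X) s = 0} = 0) :
    Integrable (fun s => Fder hX ((f : S → X) s) ((g : S → X) s)) μ ∧
      HasDerivAt (fun t : ℝ => ‖f + t • g‖)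
        (∫ s, Fder hX ((f : S → X) s) ((g : S → X) s) ∂μ) 0 := by
  set f₀ : S → X := (f : S → X) with hf₀def
  set g₀ : S → X := (g : S → X) with hg₀def
  have hf₀ : AEStronglyMeasurable f₀ μ := Lp.aestronglyMeasurable f
  have hg₀ : AEStronglyMeasurable g₀ μ := Lp.aestronglyMeasurable g
  have hfne : ∀ᵐ s ∂μ, f₀ s ≠ 0 := by
    rw [MeasureTheory.ae_iff]; simpa using hz
  have hgint : Integrable g₀ μ := L1.integrable_coeFn g
  have hfint : Integrable f₀ μ := L1.integrable_coeFn f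
  set F : ℝ → S → ℝ := fun t s => ‖f₀ s + t • g₀ s‖ with hFdef
  set F' : S → ℝ := fun s => Fder hX (f₀ s) (g₀ s) with hF'def
  have h_diff : ∀ᵐ s ∂μ, HasDerivAt (fun t => F t s) (F' s) 0 := by
    filter_upwards [hfne] with s hs
    have h2 : HasDerivAt (fun t : ℝ => f₀ s + t • g₀ s) (g₀ s) 0 := by
      simpa using ((hasDerivAt_id (0:ℝ)).smul_const (g₀ s)).const_add (f₀ s)
    have h1' : HasFDerivAt (fun y : X => ‖y‖) (Fder hX (f₀ s)) (f₀ s + (0:ℝ) • g₀ s) := by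
      simpa using Fder_spec hX hs
    exact h1'.comp_hasDerivAt 0 h2
  have h_lip : ∀ᵐ s ∂μ,
      LipschitzOnWith (Real.nnabs (‖g₀ s‖)) (fun t => F t s) (Metric.ball (0:ℝ) 1) := by
    filter_upwards with s
    have hl : LipschitzWith ‖g₀ s‖₊ (fun t : ℝ => F t s) := by
      apply LipschitzWith.of_dist_le_mul
      intro a b
      rw [Real.dist_eq, Real.dist_eq]
      calc |‖f₀ s + a • g₀ s‖ - ‖f₀ s + b • g₀ s‖|
          ≤ ‖(f₀ s + a • g₀ s) - (f₀ s + b • g₀ s)‖ := abs_norm_sub_norm_le _ _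
        _ = ‖(a - b) • g₀ s‖ := by
            rw [show (f₀ s + a • g₀ s) - (f₀ s + b • g₀ s) = (a - b) • g₀ s by module]
        _ = |a - b| * ‖g₀ s‖ := by rw [norm_smul, Real.norm_eq_abs]
        _ = ‖g₀ s‖ * |a - b| := mul_comm _ _
    have heq : Real.nnabs (‖g₀ s‖) = ‖g₀ s‖₊ := by
      ext
      simp [abs_of_nonneg (norm_nonneg _)]
    rw [heq]
    exact hl.lipschitzOnWith
  have hQmeas : ∀ n : ℕ, AEStronglyMeasurable
      (fun s => (((n:ℝ)+1)) * (‖f₀ s + ((n:ℝ)+1)⁻¹ • g₀ s‖ - ‖f₀ s‖)) μ :=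
    fun n => (((hf₀.add (hg₀.const_smul _)).norm.sub hf₀.norm).const_mul _)
  have hF'meas : AEStronglyMeasurable F' μ := by
    apply aestronglyMeasurable_of_tendsto_ae Filter.atTop hQmeas
    filter_upwards [h_diff] with s hs
    rw [hasDerivAt_iff_tendsto_slope] at hs
    have htn : Filter.Tendsto (fun n : ℕ => ((n:ℝ)+1)⁻¹) Filter.atTop
        (nhdsWithin 0 {(0:ℝ)}ᶜ) := by
      apply tendsto_nhdsWithin_of_tendsto_nhds_of_eventually_within
      · simpa only [one_div] using tendsto_one_div_add_atTop_nhds_zero_nat (𝕜 := ℝ)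
      · filter_upwards with n
        simp only [Set.mem_compl_iff, Set.mem_singleton_iff]
        positivity
    have hcomp := hs.comp htn
    refine Filter.Tendsto.congr (fun n => ?_) hcomp
    simp only [Function.comp, slope_def_field, hFdef]
    rw [zero_smul, add_zero, sub_zero, div_eq_mul_inv, inv_inv, mul_comm]
  obtain ⟨hint, hder⟩ := hasDerivAt_integral_of_dominated_loc_of_lip (Metric.ball_mem_nhds (0:ℝ) one_pos)
    (Filter.Eventually.of_forall fun t => (hf₀.add (hg₀.const_smul t)).norm)
    (by simpa [hFdef] using hfint.norm)
    hF'meas h_lip hgint.norm h_diff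
  refine ⟨hint, ?_⟩
  have hnorm : ∀ t : ℝ, ‖f + t • g‖ = ∫ s, F t s ∂μ := by
    intro t
    rw [L1.norm_eq_integral_norm]
    apply integral_congr_ae
    filter_upwards [Lp.coeFn_add f (t • g), Lp.coeFn_smul t g] with s h1 h2
    rw [h1, Pi.add_apply, h2, Pi.smul_apply]
  refine hder.congr_of_eventuallyEq (Filter.Eventually.of_forall fun t => ?_)
  show ‖f + t • g‖ = ∫ a, ‖(f₀ + t • g₀) a‖ ∂μ
  rw [hnorm t]
  simp only [Pi.add_apply, Pi.smul_apply]
  rfl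

end BJAux

theorem BJ_right_additive_at_ae_nonzero_L1
    {S X : Type*} [MeasurableSpace S] {μ : Measure S} [μ.IsComplete]
    [NormedAddCommGroup X] [NormedSpace ℝ X] [CompleteSpace X]
    (hX : FrechetDiffNorm X)
    (f g₁ g₂ : Lp X 1 μ) (hf : f ≠ 0)
    (hz : μ {s | (f : S → X) s = 0} = 0)
    (h1 : BJOrth f g₁) (h2 : BJOrth f g₂) :
    BJOrth f (g₁ + g₂) := by
  classical
  obtain ⟨hi1, hd1⟩ := BJAux.deriv_lemma hX f g₁ hz
  obtain ⟨hi2, hd2⟩ := BJAux.deriv_lemma hX f g₂ hz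
  obtain ⟨hi3, hd3⟩ := BJAux.deriv_lemma hX f (g₁ + g₂) hz
  have e1 := (BJAux.bj_iff f g₁ hd1).1 h1
  have e2 := (BJAux.bj_iff f g₂ hd2).1 h2
  refine (BJAux.bj_iff f (g₁ + g₂) hd3).2 ?_
  have hae : (fun s => BJAux.Fder hX ((f : S → X) s) (((g₁ + g₂ : Lp X 1 μ) : S → X) s))
      =ᵐ[μ] fun s => BJAux.Fder hX ((f : S → X) s) ((g₁ : S → X) s)
        + BJAux.Fder hX ((f : S → X) s) ((g₂ : S → X) s) := by
    filter_upwards [Lp.coeFn_add g₁ g₂] with s hs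
    rw [hs, Pi.add_apply, map_add]
  rw [integral_congr_ae hae, integral_add hi1 hi2, e1, e2, add_zero]
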